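/- Let L(W,V) be a differentiable function of matrices W ∈ Mat(d₂,d₁), V ∈ Mat(d₃,d₂) such that L(A·W, V·A⁻¹) = L(W,V) for all invertible A near the identity (equivalently, trace((∂L/∂W)ᵀ B W) = trace((∂L/∂V)ᵀ V B) for all B ∈ Mat(d₂)). If (W(t),V(t)) solves gradient flow Ẇ = −∂L/∂W, V̇ = −∂L/∂V, then W(t)W(t)ᵀ − V(t)ᵀV(t) is constant. -/

import Mathlib

/-!
Testing the linearized invariance `tr (Gᵀ B W) = tr (Hᵀ V B)` against all `B` gives the
matrix identity `W Gᵀ = Hᵀ V` between the parameters and their gradients `G`, `H`. Along the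
gradient flow the derivative of `W Wᵀ - Vᵀ V` is `-(G Wᵀ + W Gᵀ) + (Hᵀ V + Vᵀ H)`, which this
identity and its transpose make vanish entrywise.
-/

open Matrix

namespace Matrix

variable {m n p R : Type*}

theorem mul_transpose_eq_of_trace_mul_eq [Fintype m] [Fintype n] [Fintype p] [CommRing R]
    {G W : Matrix n m R} {H V : Matrix p n R}
    (h : ∀ B : Matrix n n R, (Gᵀ * (B * W)).trace = (Hᵀ * (V * B)).trace) :
    W * Gᵀ = Hᵀ * V :=
  ext_iff_trace_mul_right.mpr fun B => by
    rw [← trace_mul_cycle, Matrix.mul_assoc, h, Matrix.mul_assoc]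

variable {𝕜 : Type*} [NontriviallyNormedField 𝕜]

theorem hasDerivAt_mul_apply [Fintype n] {A : 𝕜 → Matrix m n 𝕜} {B : 𝕜 → Matrix n p 𝕜}
    {A' : Matrix m n 𝕜} {B' : Matrix n p 𝕜} {t : 𝕜}
    (hA : ∀ i j, HasDerivAt (fun t => A t i j) (A' i j) t)
    (hB : ∀ i j, HasDerivAt (fun t => B t i j) (B' i j) t) (i : m) (k : p) :
    HasDerivAt (fun t => (A t * B t) i k) ((A' * B t + A t * B') i k) t := by
  simp only [mul_apply, add_apply, ← Finset.sum_add_distrib]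
  exact HasDerivAt.fun_sum fun j _ => (hA i j).mul (hB j k)

theorem eq_of_hasDerivAt_apply_zero {D : ℝ → Matrix m n ℝ}
    (h : ∀ i j t, HasDerivAt (fun t => D t i j) 0 t) (t s : ℝ) : D t = D s := by
  ext i j
  exact is_const_of_deriv_eq_zero (fun u => (h i j u).differentiableAt) (fun u => (h i j u).deriv)
    t s

end Matrix

theorem linear_network_gradient_flow_balancedness_general
    (d₁ d₂ d₃ : ℕ)
    (GW : Matrix (Fin d₂) (Fin d₁) ℝ → Matrix (Fin d₃) (Fin d₂) ℝ → Matrix (Fin d₂) (Fin d₁) ℝ)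
    (GV : Matrix (Fin d₂) (Fin d₁) ℝ → Matrix (Fin d₃) (Fin d₂) ℝ → Matrix (Fin d₃) (Fin d₂) ℝ)
    (hinv : ∀ W V (B : Matrix (Fin d₂) (Fin d₂) ℝ),
      ((GW W V)ᵀ * (B * W)).trace = ((GV W V)ᵀ * (V * B)).trace)
    (W : ℝ → Matrix (Fin d₂) (Fin d₁) ℝ) (V : ℝ → Matrix (Fin d₃) (Fin d₂) ℝ)
    (hWflow : ∀ (i j) (t : ℝ), HasDerivAt (fun t => W t i j) (-(GW (W t) (V t)) i j) t)
    (hVflow : ∀ (i j) (t : ℝ), HasDerivAt (fun t => V t i j) (-(GV (W t) (V t)) i j) t) :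
    ∀ t s : ℝ, W t * (W t)ᵀ - (V t)ᵀ * V t = W s * (W s)ᵀ - (V s)ᵀ * V s := by
  refine eq_of_hasDerivAt_apply_zero fun a b t => ?_
  set G := GW (W t) (V t)
  set H := GV (W t) (V t)
  have hWT : ∀ i j, HasDerivAt (fun t => (W t)ᵀ i j) ((-G)ᵀ i j) t := fun i j => hWflow j i t
  have hVT : ∀ i j, HasDerivAt (fun t => (V t)ᵀ i j) ((-H)ᵀ i j) t := fun i j => hVflow j i t
  have hbal : W t * Gᵀ = Hᵀ * V t := mul_transpose_eq_of_trace_mul_eq (hinv (W t) (V t))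
  have hbalT : G * (W t)ᵀ = (V t)ᵀ * H := by
    simpa only [transpose_mul, transpose_transpose] using congr_arg transpose hbal
  refine ((hasDerivAt_mul_apply (A' := -G) (fun i j => hWflow i j t) hWT a b).sub
    (hasDerivAt_mul_apply (B' := -H) hVT (fun i j => hVflow i j t) a b)).congr_deriv ?_
  simp only [transpose_neg, Matrix.neg_mul, Matrix.mul_neg, hbal, hbalT, Matrix.add_apply,
    Matrix.neg_apply]
  ring

theorem linear_network_gradient_flow_balancedness
    (d₁ d₂ d₃ : ℕ)
    (L : Matrix (Fin d₂) (Fin d₁) ℝ → Matrix (Fin d₃) (Fin d₂) ℝ → ℝ)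
    (GW : Matrix (Fin d₂) (Fin d₁) ℝ → Matrix (Fin d₃) (Fin d₂) ℝ → Matrix (Fin d₂) (Fin d₁) ℝ)
    (GV : Matrix (Fin d₂) (Fin d₁) ℝ → Matrix (Fin d₃) (Fin d₂) ℝ → Matrix (Fin d₃) (Fin d₂) ℝ)
    (hGW : ∀ W V i j, HasDerivAt (fun s : ℝ => L (W + s • Matrix.single i j 1) V)
      (GW W V i j) 0)
    (hGV : ∀ W V i j, HasDerivAt (fun s : ℝ => L W (V + s • Matrix.single i j 1))
      (GV W V i j) 0)
    (hinv : ∀ W V (B : Matrix (Fin d₂) (Fin d₂) ℝ),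
      ((GW W V)ᵀ * (B * W)).trace = ((GV W V)ᵀ * (V * B)).trace)
    (W : ℝ → Matrix (Fin d₂) (Fin d₁) ℝ) (V : ℝ → Matrix (Fin d₃) (Fin d₂) ℝ)
    (hWflow : ∀ (i j) (t : ℝ), HasDerivAt (fun t => W t i j) (-(GW (W t) (V t)) i j) t)
    (hVflow : ∀ (i j) (t : ℝ), HasDerivAt (fun t => V t i j) (-(GV (W t) (V t)) i j) t) :
    ∀ t s : ℝ, W t * (W t)ᵀ - (V t)ᵀ * V t = W s * (W s)ᵀ - (V s)ᵀ * V s :=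
  linear_network_gradient_flow_balancedness_general d₁ d₂ d₃ GW GV hinv W V hWflow hVflow
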